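/- arXiv:2411.08532 — 6 statements merged into one kernel-verified Lean document; each statement's English description precedes it below -/
import Mathlib

section
/- Let ψ ∈ L²(ℝⁿ) be a normalized state in the domain of a symmetric operator A. Then over all real-valued Borel measurable functions f : ℝⁿ → ℝ with fψ ∈ L², the quantity ‖(A − f(X))ψ‖² is minimized by f(x) = Re(conj(ψ(x))·(Aψ)(x))/|ψ(x)|² on the set {ψ ≠ 0} (and 0 elsewhere), and any two minimizers agree a.e. on {ψ ≠ 0}. -/
/-!
Pointwise, `‖a - r p‖² = ‖a - c p‖² + (r - c)² ‖p‖²` for every real `r`, where `c p` is the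
orthogonal projection of `a` onto the real line `ℝ p` (Pythagoras, since `Re ((a - c p) p̄) = 0`).
Integrating, `‖Aψ - fψ‖² = ‖Aψ - f₀ψ‖² + ∫ (f - f₀)² |ψ|²`, so `f₀` minimizes, and a second
minimizer forces the last integral to vanish, i.e. `f = f₀` a.e. on `{ψ ≠ 0}`.
-/

open MeasureTheory Complex

/-- At `p = 0` every coefficient is optimal; `0` is chosen. -/
noncomputable def realProjCoeff (p a : ℂ) : ℝ :=
  if p ≠ 0 then ((starRingEnd ℂ) p * a).re / ‖p‖ ^ 2 else 0

theorem re_sub_realProjCoeff_mul_mul_conj_eq_zero (p a : ℂ) :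
    ((a - realProjCoeff p a * p) * (starRingEnd ℂ) p).re = 0 := by
  by_cases hp : p = 0
  · simp [hp]
  · have hp2 : ‖p‖ ^ 2 ≠ 0 := by positivity
    rw [realProjCoeff, if_pos hp, sub_mul, mul_assoc, mul_conj, ← Complex.sq_norm,
      ← ofReal_mul, sub_re, ofReal_re, div_mul_cancel₀ _ hp2, mul_comm a, sub_self]

theorem norm_sub_ofReal_mul_sq (p a : ℂ) (r : ℝ) :
    ‖a - r * p‖ ^ 2 =
      ‖a - realProjCoeff p a * p‖ ^ 2 + (r - realProjCoeff p a) ^ 2 * ‖p‖ ^ 2 := by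
  set c := realProjCoeff p a
  have h : a - r * p = (a - c * p) + ((c - r : ℝ) : ℂ) * p := by push_cast; ring
  rw [h, Complex.sq_norm, Complex.sq_norm, Complex.sq_norm, normSq_add, normSq_mul,
    normSq_ofReal, map_mul, conj_ofReal, mul_left_comm, re_ofReal_mul,
    re_sub_realProjCoeff_mul_mul_conj_eq_zero]
  ring

theorem norm_realProjCoeff_mul_le (p a : ℂ) : ‖(realProjCoeff p a : ℂ) * p‖ ≤ ‖a‖ := by
  have h := norm_sub_ofReal_mul_sq p a 0
  simp only [ofReal_zero, zero_mul, sub_zero, zero_sub, neg_sq] at h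
  have h' : ‖(realProjCoeff p a : ℂ) * p‖ ^ 2 = realProjCoeff p a ^ 2 * ‖p‖ ^ 2 := by
    rw [norm_mul, mul_pow, norm_real, Real.norm_eq_abs, sq_abs]
  refine (pow_le_pow_iff_left₀ (norm_nonneg _) (norm_nonneg _) two_ne_zero).1 ?_
  rw [h', h]
  exact le_add_of_nonneg_left (sq_nonneg _)

section

variable {α : Type*} [MeasurableSpace α] {μ : Measure α} {ψ Aψ : α → ℂ} {f : α → ℝ}

theorem Measurable.realProjCoeff (hψ : Measurable ψ) (hAψ : Measurable Aψ) :
    Measurable fun x => realProjCoeff (ψ x) (Aψ x) :=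
  Measurable.ite (hψ (measurableSet_singleton 0)).compl (by fun_prop) measurable_const

theorem memLp_realProjCoeff_mul (hψ : Measurable ψ) (hAψ : Measurable Aψ)
    (hAψL : MemLp Aψ 2 μ) :
    MemLp (fun x => (realProjCoeff (ψ x) (Aψ x) : ℂ) * ψ x) 2 μ :=
  hAψL.of_le
    ((measurable_ofReal.comp (hψ.realProjCoeff hAψ)).mul hψ).aestronglyMeasurable <|
    ae_of_all _ fun x => norm_realProjCoeff_mul_le (ψ x) (Aψ x)

theorem integrable_norm_sub_sq {u v : α → ℂ} (hu : MemLp u 2 μ) (hv : MemLp v 2 μ) :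
    Integrable (fun x => ‖u x - v x‖ ^ 2) μ :=
  (hu.sub hv).norm.integrable_sq

theorem integrable_sq_sub_realProjCoeff_mul_norm_sq (hAψ : MemLp Aψ 2 μ)
    (hfψ : MemLp (fun x => (f x : ℂ) * ψ x) 2 μ)
    (hψ₀ : MemLp (fun x => (realProjCoeff (ψ x) (Aψ x) : ℂ) * ψ x) 2 μ) :
    Integrable (fun x => (f x - realProjCoeff (ψ x) (Aψ x)) ^ 2 * ‖ψ x‖ ^ 2) μ :=
  ((integrable_norm_sub_sq hAψ hfψ).sub (integrable_norm_sub_sq hAψ hψ₀)).congr <|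
    ae_of_all _ fun x => by
      simp only [Pi.sub_apply, norm_sub_ofReal_mul_sq (ψ x) (Aψ x) (f x), add_sub_cancel_left]

theorem integral_norm_sub_ofReal_mul_sq (hAψ : MemLp Aψ 2 μ)
    (hfψ : MemLp (fun x => (f x : ℂ) * ψ x) 2 μ)
    (hψ₀ : MemLp (fun x => (realProjCoeff (ψ x) (Aψ x) : ℂ) * ψ x) 2 μ) :
    ∫ x, ‖Aψ x - f x * ψ x‖ ^ 2 ∂μ =
      ∫ x, ‖Aψ x - realProjCoeff (ψ x) (Aψ x) * ψ x‖ ^ 2 ∂μ +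
        ∫ x, (f x - realProjCoeff (ψ x) (Aψ x)) ^ 2 * ‖ψ x‖ ^ 2 ∂μ := by
  rw [← integral_add (integrable_norm_sub_sq hAψ hψ₀)
    (integrable_sq_sub_realProjCoeff_mul_norm_sq hAψ hfψ hψ₀)]
  exact integral_congr_ae <| ae_of_all _ fun x => norm_sub_ofReal_mul_sq (ψ x) (Aψ x) (f x)

theorem integral_norm_sub_realProjCoeff_mul_sq_le (hAψ : MemLp Aψ 2 μ)
    (hfψ : MemLp (fun x => (f x : ℂ) * ψ x) 2 μ)
    (hψ₀ : MemLp (fun x => (realProjCoeff (ψ x) (Aψ x) : ℂ) * ψ x) 2 μ) :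
    ∫ x, ‖Aψ x - realProjCoeff (ψ x) (Aψ x) * ψ x‖ ^ 2 ∂μ ≤
      ∫ x, ‖Aψ x - f x * ψ x‖ ^ 2 ∂μ := by
  rw [integral_norm_sub_ofReal_mul_sq hAψ hfψ hψ₀]
  exact le_add_of_nonneg_right (integral_nonneg fun x => by positivity)

theorem ae_eq_realProjCoeff_of_integral_norm_sub_mul_sq_le (hAψ : MemLp Aψ 2 μ)
    (hfψ : MemLp (fun x => (f x : ℂ) * ψ x) 2 μ)
    (hψ₀ : MemLp (fun x => (realProjCoeff (ψ x) (Aψ x) : ℂ) * ψ x) 2 μ)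
    (hmin : ∫ x, ‖Aψ x - f x * ψ x‖ ^ 2 ∂μ ≤
      ∫ x, ‖Aψ x - realProjCoeff (ψ x) (Aψ x) * ψ x‖ ^ 2 ∂μ) :
    ∀ᵐ x ∂μ, ψ x ≠ 0 → f x = realProjCoeff (ψ x) (Aψ x) := by
  have hexcess : ∫ x, (f x - realProjCoeff (ψ x) (Aψ x)) ^ 2 * ‖ψ x‖ ^ 2 ∂μ = 0 := by
    rw [integral_norm_sub_ofReal_mul_sq hAψ hfψ hψ₀] at hmin
    exact le_antisymm (by linarith) (integral_nonneg fun x => by positivity)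
  rw [integral_eq_zero_iff_of_nonneg (fun x => by positivity)
    (integrable_sq_sub_realProjCoeff_mul_norm_sq hAψ hfψ hψ₀)] at hexcess
  filter_upwards [hexcess] with x hx hψx
  have hψx' : ‖ψ x‖ ^ 2 ≠ 0 := by positivity
  simpa [sub_eq_zero, hψx'] using hx

end

theorem stmt_0_general {n : ℕ} (ψ Aψ : (Fin n → ℝ) → ℂ)
    (hψmeas : Measurable ψ) (hAψmeas : Measurable Aψ)
    (hAψ : MemLp Aψ 2 (volume : Measure (Fin n → ℝ)))
    (f₀ : (Fin n → ℝ) → ℝ)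
    (hf₀ : ∀ x, f₀ x =
      if ψ x ≠ 0 then ((starRingEnd ℂ) (ψ x) * Aψ x).re / ‖ψ x‖ ^ 2 else 0) :
    (Measurable f₀ ∧
      MemLp (fun x => (f₀ x : ℂ) * ψ x) 2 (volume : Measure (Fin n → ℝ)) ∧
      ∀ f : (Fin n → ℝ) → ℝ, Measurable f →
        MemLp (fun x => (f x : ℂ) * ψ x) 2 (volume : Measure (Fin n → ℝ)) →
        ∫ x, ‖Aψ x - (f₀ x : ℂ) * ψ x‖ ^ 2 ≤ ∫ x, ‖Aψ x - (f x : ℂ) * ψ x‖ ^ 2) ∧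
    (∀ f g : (Fin n → ℝ) → ℝ, Measurable f → Measurable g →
      MemLp (fun x => (f x : ℂ) * ψ x) 2 (volume : Measure (Fin n → ℝ)) →
      MemLp (fun x => (g x : ℂ) * ψ x) 2 (volume : Measure (Fin n → ℝ)) →
      (∀ h : (Fin n → ℝ) → ℝ, Measurable h →
        MemLp (fun x => (h x : ℂ) * ψ x) 2 (volume : Measure (Fin n → ℝ)) →
        ∫ x, ‖Aψ x - (f x : ℂ) * ψ x‖ ^ 2 ≤ ∫ x, ‖Aψ x - (h x : ℂ) * ψ x‖ ^ 2) →
      (∀ h : (Fin n → ℝ) → ℝ, Measurable h →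
        MemLp (fun x => (h x : ℂ) * ψ x) 2 (volume : Measure (Fin n → ℝ)) →
        ∫ x, ‖Aψ x - (g x : ℂ) * ψ x‖ ^ 2 ≤ ∫ x, ‖Aψ x - (h x : ℂ) * ψ x‖ ^ 2) →
      ∀ᵐ x ∂(volume : Measure (Fin n → ℝ)), ψ x ≠ 0 → f x = g x) := by
  obtain rfl : f₀ = fun x => realProjCoeff (ψ x) (Aψ x) := funext hf₀
  have hmeas := hψmeas.realProjCoeff hAψmeas
  have hψ₀ := memLp_realProjCoeff_mul (μ := volume) hψmeas hAψmeas hAψ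
  refine ⟨⟨hmeas, hψ₀, fun f _ hfψ =>
    integral_norm_sub_realProjCoeff_mul_sq_le hAψ hfψ hψ₀⟩, ?_⟩
  intro f g _ _ hfψ hgψ hfmin hgmin
  filter_upwards [ae_eq_realProjCoeff_of_integral_norm_sub_mul_sq_le hAψ hfψ hψ₀
      (hfmin _ hmeas hψ₀),
    ae_eq_realProjCoeff_of_integral_norm_sub_mul_sq_le hAψ hgψ hψ₀ (hgmin _ hmeas hψ₀)]
    with x hfx hgx hψx
  rw [hfx hψx, hgx hψx]

/-- the conditional expectation of a symmetric operator `A` (given via `Aψ = A ψ`)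
with respect to the position operator `X` on `L²(ℝⁿ)` is the minimizer of
`‖(A - f(X))ψ‖²` over real-valued Borel `f` with `fψ ∈ L²`, given by
`f₀(x) = Re(conj(ψ x) · (Aψ)(x)) / |ψ x|²` on `{ψ ≠ 0}` and `0` elsewhere;
any two minimizers agree a.e. on `{ψ ≠ 0}`. -/
theorem stmt_0 {n : ℕ} (ψ Aψ : (Fin n → ℝ) → ℂ)
    (hψmeas : Measurable ψ) (hAψmeas : Measurable Aψ)
    (hψ : MemLp ψ 2 (volume : Measure (Fin n → ℝ)))
    (hAψ : MemLp Aψ 2 (volume : Measure (Fin n → ℝ)))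
    (hnorm : ∫ x, ‖ψ x‖ ^ 2 = 1)
    (f₀ : (Fin n → ℝ) → ℝ)
    (hf₀ : ∀ x, f₀ x =
      if ψ x ≠ 0 then ((starRingEnd ℂ) (ψ x) * Aψ x).re / ‖ψ x‖ ^ 2 else 0) :
    (Measurable f₀ ∧
      MemLp (fun x => (f₀ x : ℂ) * ψ x) 2 (volume : Measure (Fin n → ℝ)) ∧
      ∀ f : (Fin n → ℝ) → ℝ, Measurable f →
        MemLp (fun x => (f x : ℂ) * ψ x) 2 (volume : Measure (Fin n → ℝ)) →
        ∫ x, ‖Aψ x - (f₀ x : ℂ) * ψ x‖ ^ 2 ≤ ∫ x, ‖Aψ x - (f x : ℂ) * ψ x‖ ^ 2) ∧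
    (∀ f g : (Fin n → ℝ) → ℝ, Measurable f → Measurable g →
      MemLp (fun x => (f x : ℂ) * ψ x) 2 (volume : Measure (Fin n → ℝ)) →
      MemLp (fun x => (g x : ℂ) * ψ x) 2 (volume : Measure (Fin n → ℝ)) →
      (∀ h : (Fin n → ℝ) → ℝ, Measurable h →
        MemLp (fun x => (h x : ℂ) * ψ x) 2 (volume : Measure (Fin n → ℝ)) →
        ∫ x, ‖Aψ x - (f x : ℂ) * ψ x‖ ^ 2 ≤ ∫ x, ‖Aψ x - (h x : ℂ) * ψ x‖ ^ 2) →
      (∀ h : (Fin n → ℝ) → ℝ, Measurable h →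
        MemLp (fun x => (h x : ℂ) * ψ x) 2 (volume : Measure (Fin n → ℝ)) →
        ∫ x, ‖Aψ x - (g x : ℂ) * ψ x‖ ^ 2 ≤ ∫ x, ‖Aψ x - (h x : ℂ) * ψ x‖ ^ 2) →
      ∀ᵐ x ∂(volume : Measure (Fin n → ℝ)), ψ x ≠ 0 → f x = g x) :=
  stmt_0_general ψ Aψ hψmeas hAψmeas hAψ f₀ hf₀
end

section
/- With ψ normalized and A symmetric with ψ ∈ Dom(A), the minimum of ‖(A − f(X))ψ‖² over real-valued Borel f equals ∫_{ψ=0} |Aψ(x)|² dx + ∫_{ψ≠0} (Im((Aψ)(x)/ψ(x)))² |ψ(x)|² dx. -/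
open MeasureTheory Complex

/-! Pointwise, for `z = ψ x ≠ 0` and `w = Aψ x` we have
`‖w - t z‖² = ‖z‖² ((Re (w / z) - t)² + (Im (w / z))²)`, so `t = Re (w / z) = f₀ x` minimizes with
residual `(Im (w / z))² ‖z‖²`, while for `z = 0` the value is `‖w‖²` whatever `t` is.
Integrating these pointwise facts gives both claims. -/

theorem Complex.re_conj_mul_div_sq_norm (z w : ℂ) :
    (starRingEnd ℂ z * w).re / ‖z‖ ^ 2 = (w / z).re := by
  rw [div_eq_mul_inv w, inv_def, Complex.sq_norm, ← mul_assoc, mul_comm w, re_mul_ofReal,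
    div_eq_mul_inv]

theorem Complex.norm_sub_ofReal_mul_sq {z : ℂ} (hz : z ≠ 0) (w : ℂ) (t : ℝ) :
    ‖w - t * z‖ ^ 2 = ((w / z).re - t) ^ 2 * ‖z‖ ^ 2 + (w / z).im ^ 2 * ‖z‖ ^ 2 := by
  have : w - t * z = (w / z - t) * z := by field_simp
  rw [this, norm_mul, mul_pow, Complex.sq_norm (w / z - t), normSq_apply]
  simp only [sub_re, sub_im, ofReal_re, ofReal_im, sub_zero]
  ring

theorem Complex.norm_sub_re_div_mul_sq_of_ne_zero {z : ℂ} (hz : z ≠ 0) (w : ℂ) :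
    ‖w - (w / z).re * z‖ ^ 2 = (w / z).im ^ 2 * ‖z‖ ^ 2 := by
  simp [norm_sub_ofReal_mul_sq hz]

theorem Complex.norm_sub_re_div_mul_sq_le (z w : ℂ) (t : ℝ) :
    ‖w - (w / z).re * z‖ ^ 2 ≤ ‖w - t * z‖ ^ 2 := by
  rcases eq_or_ne z 0 with rfl | hz
  · simp
  · rw [norm_sub_ofReal_mul_sq hz, norm_sub_ofReal_mul_sq hz, sub_self, sq, zero_mul, zero_mul,
      zero_add]
    exact le_add_of_nonneg_left (by positivity)

theorem stmt_1_general {n : ℕ} (ψ Aψ : (Fin n → ℝ) → ℂ)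
    (hψmeas : Measurable ψ) (hAψmeas : Measurable Aψ)
    (hAψ : MemLp Aψ 2 (volume : Measure (Fin n → ℝ)))
    (f₀ : (Fin n → ℝ) → ℝ)
    (hf₀ : ∀ x, f₀ x =
      if ψ x ≠ 0 then ((starRingEnd ℂ) (ψ x) * Aψ x).re / ‖ψ x‖ ^ 2 else 0) :
    (∀ f : (Fin n → ℝ) → ℝ, Measurable f →
      MemLp (fun x => (f x : ℂ) * ψ x) 2 (volume : Measure (Fin n → ℝ)) →
      ∫ x, ‖Aψ x - (f₀ x : ℂ) * ψ x‖ ^ 2 ≤ ∫ x, ‖Aψ x - (f x : ℂ) * ψ x‖ ^ 2) ∧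
    ∫ x, ‖Aψ x - (f₀ x : ℂ) * ψ x‖ ^ 2 =
      (∫ x in {x | ψ x = 0}, ‖Aψ x‖ ^ 2) +
        ∫ x in {x | ψ x ≠ 0}, ((Aψ x / ψ x).im) ^ 2 * ‖ψ x‖ ^ 2 := by
  -- `Aψ x / 0 = 0`, so `f₀` is `Re (Aψ / ψ)` everywhere
  obtain rfl : f₀ = fun x => (Aψ x / ψ x).re := funext fun x => by
    rw [hf₀, re_conj_mul_div_sq_norm, ite_not]
    split_ifs with h <;> simp [h]
  have hint : Integrable (fun x => ‖Aψ x - ((Aψ x / ψ x).re : ℂ) * ψ x‖ ^ 2) := by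
    refine ((memLp_two_iff_integrable_sq_norm hAψ.1).1 hAψ).mono' (by fun_prop)
      (ae_of_all _ fun x => ?_)
    simpa using norm_sub_re_div_mul_sq_le (ψ x) (Aψ x) 0
  refine ⟨fun f _ hfψ => integral_mono hint ?_ fun x => norm_sub_re_div_mul_sq_le _ _ _, ?_⟩
  · exact (memLp_two_iff_integrable_sq_norm (hAψ.sub hfψ).1).1 (hAψ.sub hfψ)
  have hzero : MeasurableSet {x | ψ x = 0} := hψmeas (measurableSet_singleton 0)
  rw [← integral_add_compl hzero hint]
  congr 1
  · refine setIntegral_congr_fun hzero fun x (hx : ψ x = 0) => ?_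
    simp [hx]
  · refine setIntegral_congr_fun hzero.compl fun x (hx : ψ x ≠ 0) => ?_
    exact norm_sub_re_div_mul_sq_of_ne_zero hx _

/-- the minimum of `‖(A - f(X))ψ‖²` over real-valued Borel `f`
(attained at the conditional expectation `f₀`) equals
`∫_{ψ=0} |Aψ|² dx + ∫_{ψ≠0} (Im(Aψ/ψ))² |ψ|² dx`. -/
theorem stmt_1 {n : ℕ} (ψ Aψ : (Fin n → ℝ) → ℂ)
    (hψmeas : Measurable ψ) (hAψmeas : Measurable Aψ)
    (hψ : MemLp ψ 2 (volume : Measure (Fin n → ℝ)))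
    (hAψ : MemLp Aψ 2 (volume : Measure (Fin n → ℝ)))
    (hnorm : ∫ x, ‖ψ x‖ ^ 2 = 1)
    (f₀ : (Fin n → ℝ) → ℝ)
    (hf₀ : ∀ x, f₀ x =
      if ψ x ≠ 0 then ((starRingEnd ℂ) (ψ x) * Aψ x).re / ‖ψ x‖ ^ 2 else 0) :
    (∀ f : (Fin n → ℝ) → ℝ, Measurable f →
      MemLp (fun x => (f x : ℂ) * ψ x) 2 (volume : Measure (Fin n → ℝ)) →
      ∫ x, ‖Aψ x - (f₀ x : ℂ) * ψ x‖ ^ 2 ≤ ∫ x, ‖Aψ x - (f x : ℂ) * ψ x‖ ^ 2) ∧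
    ∫ x, ‖Aψ x - (f₀ x : ℂ) * ψ x‖ ^ 2 =
      (∫ x in {x | ψ x = 0}, ‖Aψ x‖ ^ 2) +
        ∫ x in {x | ψ x ≠ 0}, ((Aψ x / ψ x).im) ^ 2 * ‖ψ x‖ ^ 2 :=
  stmt_1_general ψ Aψ hψmeas hAψmeas hAψ f₀ hf₀
end

section
/- For a smooth normalized nowhere-vanishing ψ = R e^{iS} ∈ L²(ℝ) with P = (1/i)d/dx, the minimum over real Borel f of ‖(P − f(X))ψ‖² equals ∫_ℝ (R'(x))² dx, which equals (1/4)·I_F(ρ_ψ), where I_F(ρ) = ∫ ((d/dx) log ρ)² ρ dx is the Fisher information of ρ_ψ = |ψ|² = R². -/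
open MeasureTheory Complex

lemma exp_norm_one (t : ℝ) : ‖Complex.exp (Complex.I * (t : ℂ))‖ = 1 := by
  rw [Complex.norm_exp]
  simp

/-- for a smooth normalized nowhere-vanishing `ψ = R e^{iS}` on `ℝ`
with `P = (1/i)d/dx`, the minimum over real Borel `f` of `‖(P − f(X))ψ‖²` equals
`∫ (R')² dx`, which equals `(1/4)·I_F(ρ_ψ)` where
`I_F(ρ) = ∫ ((log ρ)')² ρ dx` is the Fisher information of `ρ_ψ = |ψ|² = R²`. -/
theorem stmt_4 (R S : ℝ → ℝ) (ψ : ℝ → ℂ)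
    (hR : ContDiff ℝ (⊤ : ℕ∞) R) (hS : ContDiff ℝ (⊤ : ℕ∞) S) (hRpos : ∀ x, 0 < R x)
    (hψ : ∀ x, ψ x = (R x : ℂ) * Complex.exp (Complex.I * (S x : ℂ)))
    (hnorm : ∫ x, (R x) ^ 2 = 1)
    (hψL2 : MemLp ψ 2 (volume : Measure ℝ))
    (hPψ : MemLp (fun x => -Complex.I * deriv ψ x) 2 (volume : Measure ℝ))
    (hR' : Integrable (fun x => (deriv R x) ^ 2) (volume : Measure ℝ))
    (hSψ : MemLp (fun x => (Complex.ofReal (deriv S x)) * ψ x) 2 (volume : Measure ℝ)) :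
    (∫ x, ‖(-Complex.I * deriv ψ x) - (Complex.ofReal (deriv S x)) * ψ x‖ ^ 2
        = ∫ x, (deriv R x) ^ 2) ∧
    (∀ f : ℝ → ℝ, Measurable f →
      MemLp (fun x => (f x : ℂ) * ψ x) 2 (volume : Measure ℝ) →
      ∫ x, (deriv R x) ^ 2
        ≤ ∫ x, ‖(-Complex.I * deriv ψ x) - (f x : ℂ) * ψ x‖ ^ 2) ∧
    ∫ x, (deriv R x) ^ 2
      = (1 / 4) * ∫ x, (deriv (fun y => Real.log ((R y) ^ 2)) x) ^ 2 * (R x) ^ 2 := by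
  have hψfun : ψ = fun x => (R x : ℂ) * Complex.exp (Complex.I * (S x : ℂ)) :=
    funext hψ
  have hderiv : ∀ x, deriv ψ x =
      (((deriv R x : ℝ) : ℂ) + Complex.I * ((deriv S x : ℝ) : ℂ) * (R x : ℂ)) *
        Complex.exp (Complex.I * (S x : ℂ)) := by
    intro x
    have hRd := ((hR.differentiable (by simp) x).hasDerivAt).ofReal_comp
    have hSd := ((hS.differentiable (by simp) x).hasDerivAt).ofReal_comp.const_mul Complex.I
    have hE := hSd.cexp
    have := (hRd.fun_mul hE)
    rw [hψfun]
    rw [this.deriv]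
    ring
  have key : ∀ (c x : ℝ),
      ‖(-Complex.I * deriv ψ x) - (c : ℂ) * ψ x‖ ^ 2
        = (deriv R x) ^ 2 + ((deriv S x - c) * R x) ^ 2 := by
    intro c x
    have : (-Complex.I * deriv ψ x) - (c : ℂ) * ψ x
        = (-Complex.I * ((deriv R x : ℝ) : ℂ) + ((deriv S x - c : ℝ) : ℂ) * (R x : ℂ)) *
            Complex.exp (Complex.I * (S x : ℂ)) := by
      rw [hderiv x, hψ x]
      push_cast
      ring_nf
      rw [Complex.I_sq]
      ring
    rw [this, norm_mul, exp_norm_one, mul_one]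
    rw [← Complex.normSq_eq_norm_sq, Complex.normSq_apply]
    simp [Complex.add_re, Complex.add_im]
    ring
  have hkeyS : ∀ x, ‖(-Complex.I * deriv ψ x) - ((deriv S x : ℝ) : ℂ) * ψ x‖ ^ 2
      = (deriv R x) ^ 2 := by
    intro x
    rw [key (deriv S x) x]
    simp
  have hfirst : ∫ x, ‖(-Complex.I * deriv ψ x) - (Complex.ofReal (deriv S x)) * ψ x‖ ^ 2
      = ∫ x, (deriv R x) ^ 2 := by
    exact integral_congr_ae (Filter.Eventually.of_forall hkeyS)
  refine ⟨hfirst, ?_, ?_⟩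
  · intro f hf hfψ
    have hsub : MemLp (fun x => (-Complex.I * deriv ψ x) - (f x : ℂ) * ψ x) 2
        (volume : Measure ℝ) := hPψ.sub hfψ
    have hint : Integrable (fun x => ‖(-Complex.I * deriv ψ x) - (f x : ℂ) * ψ x‖ ^ 2)
        (volume : Measure ℝ) := by
      have := hsub.integrable_norm_rpow (by norm_num) (by norm_num)
      simpa [ENNReal.toReal_ofNat, Real.rpow_natCast] using this
    apply integral_mono hR' hint
    intro x
    dsimp only
    rw [key (f x) x]
    nlinarith [sq_nonneg ((deriv S x - f x) * R x)]
  · have hlog : ∀ x, deriv (fun y => Real.log ((R y) ^ 2)) x = 2 * deriv R x / R x := by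
      intro x
      have hRd : HasDerivAt R (deriv R x) x := (hR.differentiable (by simp) x).hasDerivAt
      have hsq : HasDerivAt (fun y => (R y) ^ 2) (2 * R x * deriv R x) x := by
        simpa [mul_comm, mul_assoc] using (hRd.fun_pow 2)
      have hne : (R x) ^ 2 ≠ 0 := pow_ne_zero 2 (hRpos x).ne'
      have hne0 : R x ≠ 0 := (hRpos x).ne'
      have := (hsq.log hne).deriv
      rw [this]
      field_simp [hne0]
    have hcongr : ∫ x, (deriv (fun y => Real.log ((R y) ^ 2)) x) ^ 2 * (R x) ^ 2
        = ∫ x, 4 * (deriv R x) ^ 2 := by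
      apply integral_congr_ae (Filter.Eventually.of_forall ?_)
      intro x
      rw [hlog x]
      have hne : R x ≠ 0 := (hRpos x).ne'
      field_simp
      ring
    rw [hcongr, integral_const_mul]
    ring
end

section
/- For a smooth nowhere-vanishing ψ on ℝⁿ, the quantum potential equals half the conditional variance of momentum given position: Q_ψ = (1/2)(Re(−Δψ/ψ) − |Re((∇ψ)/(iψ))|²), i.e. Q_ψ = (1/2)(E_ψ(P²|X) − E_ψ(P|X)²) pointwise. -/
open Complex

/-!
Write `ψ = R e^{iS}`. Differentiating twice along a direction `v` gives
`∂ᵥψ / ψ = ∂ᵥR / R + i ∂ᵥS` and `Re (∂ᵥ²ψ / ψ) = ∂ᵥ²R / R - (∂ᵥS)²`, the phase `e^{iS}` cancelling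
in both quotients. Summing over the coordinate directions, the `(∂ⱼS)²` terms cancel against
`E_ψ(P|X)² = Σⱼ (∂ⱼS)²`, leaving `-ΔR / (2R)`.
-/

variable {E : Type*} [NormedAddCommGroup E] [NormedSpace ℝ E] {x : E}

noncomputable def madelung (R S : E → ℝ) : E → ℂ := fun y => R y * exp (I * S y)

theorem hasFDerivAt_ofReal_comp {g : E → ℝ} (hg : DifferentiableAt ℝ g x) :
    HasFDerivAt (fun y => (g y : ℂ)) (ofRealCLM.comp (fderiv ℝ g x)) x :=
  ofRealCLM.hasFDerivAt.comp x hg.hasFDerivAt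

theorem fderiv_mul_exp_I_mul_apply {f : E → ℂ} {S : E → ℝ} (hf : DifferentiableAt ℝ f x)
    (hS : DifferentiableAt ℝ S x) (v : E) :
    fderiv ℝ (fun y => f y * exp (I * S y)) x v
      = (fderiv ℝ f x v + I * f x * fderiv ℝ S x v) * exp (I * S x) := by
  have h : HasFDerivAt (fun y => f y * exp (I * S y)) _ x :=
    hf.hasFDerivAt.mul ((hasFDerivAt_ofReal_comp hS).const_mul I).cexp
  rw [h.fderiv]
  simp only [add_apply, smul_apply, ContinuousLinearMap.comp_apply, ofRealCLM_apply, smul_eq_mul]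
  ring

theorem fderiv_madelung_apply {R S : E → ℝ} (hR : DifferentiableAt ℝ R x)
    (hS : DifferentiableAt ℝ S x) (v : E) :
    fderiv ℝ (madelung R S) x v
      = (fderiv ℝ R x v + I * R x * fderiv ℝ S x v) * exp (I * S x) := by
  unfold madelung
  rw [fderiv_mul_exp_I_mul_apply (hasFDerivAt_ofReal_comp hR).differentiableAt hS,
    (hasFDerivAt_ofReal_comp hR).fderiv, ContinuousLinearMap.comp_apply, ofRealCLM_apply]

theorem fderiv_fderiv_madelung_apply {R S : E → ℝ} (hR : ContDiff ℝ 2 R) (hS : ContDiff ℝ 2 S)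
    (v : E) :
    fderiv ℝ (fun y => fderiv ℝ (madelung R S) y v) x v
      = (fderiv ℝ (fun y => fderiv ℝ R y v) x v - R x * fderiv ℝ S x v ^ 2
          + I * (2 * fderiv ℝ R x v * fderiv ℝ S x v
            + R x * fderiv ℝ (fun y => fderiv ℝ S y v) x v)) * exp (I * S x) := by
  have hRd : Differentiable ℝ R := hR.differentiable two_ne_zero
  have hSd : Differentiable ℝ S := hS.differentiable two_ne_zero
  have hRv : Differentiable ℝ (fun y => fderiv ℝ R y v) :=
    ((hR.fderiv_right (m := 1) le_rfl).differentiable one_ne_zero).clm_apply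
      (differentiable_const v)
  have hSv : Differentiable ℝ (fun y => fderiv ℝ S y v) :=
    ((hS.fderiv_right (m := 1) le_rfl).differentiable one_ne_zero).clm_apply
      (differentiable_const v)
  have hamplitude : HasFDerivAt
      (fun y => (fderiv ℝ R y v : ℂ) + I * R y * fderiv ℝ S y v) _ x :=
    (hasFDerivAt_ofReal_comp (hRv x)).add
      (((hasFDerivAt_ofReal_comp (hRd x)).const_mul I).mul (hasFDerivAt_ofReal_comp (hSv x)))
  have hfirst : (fun y => fderiv ℝ (madelung R S) y v)
      = fun y => ((fderiv ℝ R y v : ℂ) + I * R y * fderiv ℝ S y v) * exp (I * S y) :=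
    funext fun y => fderiv_madelung_apply (hRd y) (hSd y) v
  rw [hfirst, fderiv_mul_exp_I_mul_apply hamplitude.differentiableAt (hSd x), hamplitude.fderiv]
  simp only [add_apply, smul_apply, ContinuousLinearMap.comp_apply, ofRealCLM_apply, smul_eq_mul]
  linear_combination (R x * fderiv ℝ S x v ^ 2 * exp (I * S x) : ℂ) * I_sq

theorem im_fderiv_madelung_div_madelung {R S : E → ℝ} (hR : DifferentiableAt ℝ R x)
    (hS : DifferentiableAt ℝ S x) (hRx : R x ≠ 0) (v : E) :
    (fderiv ℝ (madelung R S) x v / madelung R S x).im = fderiv ℝ S x v := by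
  rw [fderiv_madelung_apply hR hS, madelung, mul_div_mul_right _ _ (exp_ne_zero _),
    div_ofReal_im]
  simp [hRx]

theorem re_fderiv_fderiv_madelung_div_madelung {R S : E → ℝ} (hR : ContDiff ℝ 2 R)
    (hS : ContDiff ℝ 2 S) (hRx : R x ≠ 0) (v : E) :
    (fderiv ℝ (fun y => fderiv ℝ (madelung R S) y v) x v / madelung R S x).re
      = fderiv ℝ (fun y => fderiv ℝ R y v) x v / R x - fderiv ℝ S x v ^ 2 := by
  rw [fderiv_fderiv_madelung_apply hR hS, madelung, mul_div_mul_right _ _ (exp_ne_zero _),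
    div_ofReal_re]
  simp [← ofReal_pow]
  field_simp

/-- for a smooth nowhere-vanishing `ψ = R e^{iS}` on `ℝⁿ`, the
quantum potential equals half the conditional variance of momentum given
position: `Q_ψ = (1/2)(E_ψ(P²|X) − E_ψ(P|X)²)`, i.e.
`−ΔR/(2R) = (1/2)( Re(−Δψ/ψ) − Σ_j (Im(∂_jψ/ψ))² )` pointwise. -/
theorem stmt_7 {n : ℕ} (R S : (Fin n → ℝ) → ℝ) (ψ : (Fin n → ℝ) → ℂ)
    (hR : ContDiff ℝ 2 R) (hS : ContDiff ℝ 2 S) (hRpos : ∀ x, 0 < R x)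
    (hψ : ∀ x, ψ x = (R x : ℂ) * Complex.exp (Complex.I * (S x : ℂ)))
    (x : Fin n → ℝ) :
    -(∑ j : Fin n,
          fderiv ℝ (fun y => fderiv ℝ R y (Pi.single j 1)) x (Pi.single j 1))
        / (2 * R x)
      = (1 / 2) *
        (((-(∑ j : Fin n,
              fderiv ℝ (fun y => fderiv ℝ ψ y (Pi.single j 1)) x (Pi.single j 1)))
            / ψ x).re
          - ∑ j : Fin n, ((fderiv ℝ ψ x (Pi.single j 1) / ψ x).im) ^ 2) := by
  obtain rfl : ψ = madelung R S := funext hψ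
  have hRx : R x ≠ 0 := (hRpos x).ne'
  rw [neg_div (madelung R S x), Finset.sum_div, neg_re, re_sum]
  simp only [re_fderiv_fderiv_madelung_div_madelung hR hS hRx,
    im_fderiv_madelung_div_madelung (hR.differentiable two_ne_zero x)
      (hS.differentiable two_ne_zero x) hRx]
  rw [Finset.sum_sub_distrib, ← Finset.sum_div]
  field_simp
  ring
end

section
/- Let H be self-adjoint on L²(ℝⁿ) and ψ(x,t) a C¹, nowhere-vanishing solution of i∂_t ψ = Hψ with Hψ of class C¹. Then ∂_t Im(∇ψ/ψ) = −∇ Re((Hψ)/ψ); i.e. the time derivative of the Bohm momentum field equals minus the spatial gradient of the conditional expectation of H given X. -/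
/-!
Both sides are imaginary parts of mixed second partials of `log ψ`: the left side is
`Im ∂_t ∂_j log ψ`, and the Schrödinger equation turns `Re (Hψ / ψ)` into `-Im ∂_t log ψ`.
Since `ψ` is `C²` and nonvanishing, `∂_v (∂_u ψ / ψ) = ∂_u (∂_v ψ / ψ)`, which is the symmetry of
the second derivative of `ψ` after the quotient rule.
-/

open Complex

section PartialDerivatives

variable {𝕜 : Type*} [NontriviallyNormedField 𝕜]
  {E F G : Type*} [NormedAddCommGroup E] [NormedSpace 𝕜 E] [NormedAddCommGroup F] [NormedSpace 𝕜 F]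
  [NormedAddCommGroup G] [NormedSpace 𝕜 G]

theorem fderiv_comp_prodMk_left_apply {f : E × F → G} {x : E} {t : F}
    (hf : DifferentiableAt 𝕜 f (x, t)) (e : E) :
    fderiv 𝕜 (fun y => f (y, t)) x e = fderiv 𝕜 f (x, t) (e, 0) := by
  have h : HasFDerivAt (fun y => f (y, t)) ((fderiv 𝕜 f (x, t)).comp (.inl 𝕜 E F)) x :=
    hf.hasFDerivAt.comp x (hasFDerivAt_prodMk_left x t)
  rw [h.fderiv]
  rfl

theorem deriv_comp_prodMk_right {f : E × 𝕜 → G} {x : E} {t : 𝕜}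
    (hf : DifferentiableAt 𝕜 f (x, t)) :
    deriv (fun s => f (x, s)) t = fderiv 𝕜 f (x, t) (0, 1) :=
  (hf.hasFDerivAt.comp_hasDerivAt t ((hasDerivAt_const t x).prodMk (hasDerivAt_id t))).deriv

end PartialDerivatives

variable {E : Type*} [NormedAddCommGroup E] [NormedSpace ℝ E]

theorem fderiv_im_apply {f : E → ℂ} {p : E} (hf : DifferentiableAt ℝ f p) (v : E) :
    fderiv ℝ (fun q => (f q).im) p v = (fderiv ℝ f p v).im :=
  DFunLike.congr_fun (imCLM.hasFDerivAt.comp p hf.hasFDerivAt).fderiv v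

section LogarithmicDerivative

variable {Φ : E → ℂ} {p : E}

theorem differentiableAt_fderiv_apply_div (hΦ : ContDiffAt ℝ 2 Φ p) (hp : Φ p ≠ 0) (u : E) :
    DifferentiableAt ℝ (fun q => fderiv ℝ Φ q u / Φ q) p := by
  have hD : DifferentiableAt ℝ (fderiv ℝ Φ) p :=
    (hΦ.fderiv_right (m := 1) (by norm_num)).differentiableAt one_ne_zero
  have hΦd : DifferentiableAt ℝ Φ p := hΦ.differentiableAt (by norm_num)
  simp only [div_eq_mul_inv]
  exact (hD.clm_apply (differentiableAt_const u)).mul (hΦd.inv hp)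

theorem hasLineDerivAt_fderiv_apply_div (hΦ : ContDiffAt ℝ 2 Φ p) (hp : Φ p ≠ 0) (u w : E) :
    HasLineDerivAt ℝ (fun q => fderiv ℝ Φ q u / Φ q)
      ((fderiv ℝ (fderiv ℝ Φ) p w u * Φ p - fderiv ℝ Φ p u * fderiv ℝ Φ p w) / Φ p ^ 2) p w := by
  have hD : DifferentiableAt ℝ (fderiv ℝ Φ) p :=
    (hΦ.fderiv_right (m := 1) (by norm_num)).differentiableAt one_ne_zero
  have hΦd : DifferentiableAt ℝ Φ p := hΦ.differentiableAt (by norm_num)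
  have hnum : HasDerivAt (fun r : ℝ => fderiv ℝ Φ (p + r • w) u)
      (fderiv ℝ (fderiv ℝ Φ) p w u) 0 := by
    simpa using (hD.hasFDerivAt.hasLineDerivAt w).clm_apply (hasDerivAt_const 0 u)
  have hden : HasDerivAt (fun r : ℝ => Φ (p + r • w)) (fderiv ℝ Φ p w) 0 :=
    hΦd.hasFDerivAt.hasLineDerivAt w
  have hquot := hnum.fun_div hden (by simpa using hp)
  simp only [zero_smul, add_zero] at hquot
  exact hquot

theorem fderiv_fderiv_apply_div_comm (hΦ : ContDiffAt ℝ 2 Φ p) (hp : Φ p ≠ 0) (u v : E) :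
    fderiv ℝ (fun q => fderiv ℝ Φ q u / Φ q) p v = fderiv ℝ (fun q => fderiv ℝ Φ q v / Φ q) p u := by
  rw [← (differentiableAt_fderiv_apply_div hΦ hp u).lineDeriv_eq_fderiv,
    ← (differentiableAt_fderiv_apply_div hΦ hp v).lineDeriv_eq_fderiv,
    (hasLineDerivAt_fderiv_apply_div hΦ hp u v).lineDeriv,
    (hasLineDerivAt_fderiv_apply_div hΦ hp v u).lineDeriv,
    hΦ.isSymmSndFDerivAt (by simp) v u]
  ring

end LogarithmicDerivative

theorem stmt_13_general {n : ℕ} (ψ Hψ : (Fin n → ℝ) → ℝ → ℂ)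
    (hψ : ContDiff ℝ 2 (fun q : (Fin n → ℝ) × ℝ => ψ q.1 q.2))
    (hne : ∀ x t, ψ x t ≠ 0)
    (hSch : ∀ x t, Complex.I * deriv (fun s => ψ x s) t = Hψ x t)
    (x : Fin n → ℝ) (t : ℝ) (j : Fin n) :
    deriv (fun s => ((fderiv ℝ (fun y => ψ y s) x (Pi.single j 1)) / ψ x s).im) t
      = - fderiv ℝ (fun y => (Hψ y t / ψ y t).re) x (Pi.single j 1) := by
  set Φ : (Fin n → ℝ) × ℝ → ℂ := fun q => ψ q.1 q.2
  set e : Fin n → ℝ := Pi.single j 1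
  set g : (Fin n → ℝ) × ℝ → (Fin n → ℝ) × ℝ → ℂ := fun w q => fderiv ℝ Φ q w / Φ q
  have hΦ : Differentiable ℝ Φ := hψ.differentiable (by norm_num)
  have hg : ∀ w, DifferentiableAt ℝ (g w) (x, t) := fun w =>
    differentiableAt_fderiv_apply_div hψ.contDiffAt (hne x t) w
  have hg_im : ∀ w, DifferentiableAt ℝ (fun q => (g w q).im) (x, t) := fun w =>
    imCLM.differentiableAt.comp (x, t) (hg w)
  have hspace : ∀ s, fderiv ℝ (fun y => ψ y s) x e = fderiv ℝ Φ (x, s) (e, 0) := fun s =>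
    fderiv_comp_prodMk_left_apply (hΦ (x, s)) e
  have hHψ : ∀ y, Hψ y t / ψ y t = I * g (0, 1) (y, t) := fun y => by
    rw [← hSch, deriv_comp_prodMk_right (hΦ (y, t)), mul_div_assoc]
  calc deriv (fun s => ((fderiv ℝ (fun y => ψ y s) x e) / ψ x s).im) t
      = deriv (fun s => (g (e, 0) (x, s)).im) t := by simp_rw [hspace]; rfl
    _ = (fderiv ℝ (g (e, 0)) (x, t) (0, 1)).im := by
        rw [deriv_comp_prodMk_right (hg_im (e, 0)), fderiv_im_apply (hg (e, 0))]
    _ = (fderiv ℝ (g (0, 1)) (x, t) (e, 0)).im :=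
        congrArg im (fderiv_fderiv_apply_div_comm hψ.contDiffAt (hne x t) _ _)
    _ = fderiv ℝ (fun y => (g (0, 1) (y, t)).im) x e := by
        rw [fderiv_comp_prodMk_left_apply (hg_im (0, 1)), fderiv_im_apply (hg (0, 1))]
    _ = - fderiv ℝ (fun y => (Hψ y t / ψ y t).re) x e := by
        simp only [hHψ, I_mul_re, fderiv_fun_neg, neg_apply, neg_neg]

/-- if `ψ(x,t)` is a nowhere-vanishing, sufficiently regular
solution of `i∂_tψ = Hψ` (with `Hψ` denoting the function `(Hψ)(x,t)`), then the
Bohm momentum field `p_B = Im(∇ψ/ψ)` satisfies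
`∂_t Im(∂_jψ/ψ) = −∂_j Re((Hψ)/ψ)` pointwise. -/
theorem stmt_13 {n : ℕ} (ψ Hψ : (Fin n → ℝ) → ℝ → ℂ)
    (hψ : ContDiff ℝ 2 (fun q : (Fin n → ℝ) × ℝ => ψ q.1 q.2))
    (hHψ : ContDiff ℝ 1 (fun q : (Fin n → ℝ) × ℝ => Hψ q.1 q.2))
    (hne : ∀ x t, ψ x t ≠ 0)
    (hSch : ∀ x t, Complex.I * deriv (fun s => ψ x s) t = Hψ x t)
    (x : Fin n → ℝ) (t : ℝ) (j : Fin n) :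
    deriv (fun s => ((fderiv ℝ (fun y => ψ y s) x (Pi.single j 1)) / ψ x s).im) t
      = - fderiv ℝ (fun y => (Hψ y t / ψ y t).re) x (Pi.single j 1) :=
  stmt_13_general ψ Hψ hψ hne hSch x t j
end

section
/- Let ψ = (ψ₊, ψ₋) ∈ ℂ² with ψ₊, ψ₋ ≠ 0 and ‖ψ‖ = 1, and let s_{j,±} be the diagonal entries of E_ψ(S_j | S₃) for the Pauli spin operators S_j = σ_j/2 (so s_{1,±} + i s_{2,±}(±1) satisfies 2(s_{1,+} + i s_{2,+}) = ψ₋/ψ₊ and 2(s_{1,−} − i s_{2,−}) = ψ₊/ψ₋). Setting 𝕊₊ = (s_{1,+}, s_{2,+}, 1/2) and 𝕊₋ = (s_{1,−}, s_{2,−}, −1/2), one has 𝕊₊ · 𝕊₋ = 0, (𝕊₊ × 𝕊₋)₃ = 0, and 4‖𝕊₊‖² = |ψ₊|^{−2}, 4‖𝕊₋‖² = |ψ₋|^{−2}. -/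
/-!
Put `w = ψ₋ ψ̄₊`. Then `𝕊₊` and `𝕊₋` have horizontal parts `w / (2|ψ₊|²)` and `w / (2|ψ₋|²)`,
real multiples of the same planar vector, so the third component of their cross product vanishes.
Everything else follows from `|w|² = |ψ₊|² |ψ₋|²` and `|ψ₊|² + |ψ₋|² = 1`.
-/

open Complex ComplexConjugate

lemma Complex.re_sq_add_im_sq (z : ℂ) : z.re ^ 2 + z.im ^ 2 = ‖z‖ ^ 2 := by
  rw [Complex.sq_norm, normSq_apply]
  ring

lemma Complex.sq_norm_mul_conj (a b : ℂ) : ‖b * conj a‖ ^ 2 = ‖a‖ ^ 2 * ‖b‖ ^ 2 := by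
  rw [norm_mul, norm_conj]
  ring

section HalfScaled

variable {w : ℂ} {p q : ℝ}

lemma halfScaled_dot (hp : p ≠ 0) (hq : q ≠ 0) (hw : ‖w‖ ^ 2 = p * q) :
    1 / 2 * w.re / p * (1 / 2 * w.re / q) + 1 / 2 * w.im / p * (1 / 2 * w.im / q) = 1 / 4 := by
  calc _ = (w.re ^ 2 + w.im ^ 2) / (4 * (p * q)) := by field_simp; ring
    _ = 1 / 4 := by rw [Complex.re_sq_add_im_sq, hw]; field_simp

lemma four_mul_halfScaled_sq (hp : p ≠ 0) (hw : ‖w‖ ^ 2 = p * q) (hpq : p + q = 1) :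
    4 * ((1 / 2 * w.re / p) ^ 2 + (1 / 2 * w.im / p) ^ 2 + (1 / 2) ^ 2) = p⁻¹ := by
  calc _ = (w.re ^ 2 + w.im ^ 2) / p ^ 2 + 1 := by field_simp; ring
    _ = (q + p) / p := by rw [Complex.re_sq_add_im_sq, hw]; field_simp
    _ = p⁻¹ := by rw [add_comm, hpq, one_div]

end HalfScaled

/-- for a normalized spinor `ψ = (ψ₊, ψ₋) ∈ ℂ²` with both
components nonzero, the conditional expectations `s_{j,±}` of the spin operators
`S_j = σ_j/2` given `S₃` (explicitly `s_{1,+} = (1/2)Re(ψ₋conj(ψ₊))/|ψ₊|²` etc.)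
assembled into `𝕊₊ = (s_{1,+}, s_{2,+}, 1/2)` and `𝕊₋ = (s_{1,−}, s_{2,−}, −1/2)`
satisfy `𝕊₊·𝕊₋ = 0`, `(𝕊₊×𝕊₋)₃ = 0`, `4‖𝕊₊‖² = |ψ₊|⁻²` and `4‖𝕊₋‖² = |ψ₋|⁻²`. -/
theorem stmt_18 (ψp ψm : ℂ) (hψp : ψp ≠ 0) (hψm : ψm ≠ 0)
    (hnorm : ‖ψp‖ ^ 2 + ‖ψm‖ ^ 2 = 1)
    (s1p s2p s1m s2m : ℝ)
    (h1p : s1p = (1 / 2) * (ψm * (starRingEnd ℂ) ψp).re / ‖ψp‖ ^ 2)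
    (h2p : s2p = (1 / 2) * (ψm * (starRingEnd ℂ) ψp).im / ‖ψp‖ ^ 2)
    (h1m : s1m = (1 / 2) * (ψp * (starRingEnd ℂ) ψm).re / ‖ψm‖ ^ 2)
    (h2m : s2m = -(1 / 2) * (ψp * (starRingEnd ℂ) ψm).im / ‖ψm‖ ^ 2) :
    s1p * s1m + s2p * s2m + (1 / 2) * (-(1 / 2)) = 0 ∧
    s1p * s2m - s2p * s1m = 0 ∧
    4 * (s1p ^ 2 + s2p ^ 2 + (1 / 2) ^ 2) = (‖ψp‖ ^ 2)⁻¹ ∧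
    4 * (s1m ^ 2 + s2m ^ 2 + (1 / 2) ^ 2) = (‖ψm‖ ^ 2)⁻¹ := by
  set w := ψm * conj ψp
  have hw : ‖w‖ ^ 2 = ‖ψp‖ ^ 2 * ‖ψm‖ ^ 2 := Complex.sq_norm_mul_conj ψp ψm
  have hp : ‖ψp‖ ^ 2 ≠ 0 := pow_ne_zero 2 (norm_ne_zero_iff.mpr hψp)
  have hm : ‖ψm‖ ^ 2 ≠ 0 := pow_ne_zero 2 (norm_ne_zero_iff.mpr hψm)
  have hconj : ψp * conj ψm = conj w := by simp [w, mul_comm]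
  have h1m' : s1m = 1 / 2 * w.re / ‖ψm‖ ^ 2 := by rw [h1m, hconj, conj_re]
  have h2m' : s2m = 1 / 2 * w.im / ‖ψm‖ ^ 2 := by rw [h2m, hconj, conj_im]; ring
  subst h1p h2p h1m' h2m'
  refine ⟨?_, by ring, four_mul_halfScaled_sq hp hw hnorm, ?_⟩
  · linarith [halfScaled_dot hp hm hw]
  · exact four_mul_halfScaled_sq hm (hw.trans (mul_comm _ _)) (by linarith)
end
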